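/- arXiv:0902.2693 — 2 statements merged into one kernel-verified Lean document; each statement's English description precedes it below -/
import Mathlib

section
/- Let A be a positive semidefinite symmetric d×d real matrix and let μ be a probability measure on a measurable space Γ, and let σ : Γ → ℝ^{d×d}, w : Γ → ℝ^d be bounded measurable maps such that ∫_Γ σ(γ)σ(γ)^* dμ(γ) = A. Then the vector ∫_Γ σ(γ)σ(γ)^* w(γ) dμ(γ) lies in the range of A; in particular there exists w̄ ∈ ℝ^d with A w̄ = ∫_Γ σ(γ)σ(γ)^* w(γ) dμ(γ). -/
/-!
A real symmetric matrix `A` has range `(ker A)ᗮ`, so it suffices to show that the vector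
`v = ∫ σσᵀ w dμ` is orthogonal to every `x` with `A x = 0`. For such `x`,
`∫ |σᵀ x|² dμ = xᵀ A x = 0`, hence `σ(γ)ᵀ x = 0` for `μ`-a.e. `γ`, and then
`x ⬝ v = ∫ (σᵀ x) ⬝ (σᵀ w) dμ = 0`.
-/

open MeasureTheory Matrix

theorem Matrix.IsHermitian.exists_mulVec_eq_of_dotProduct_eq_zero {n : Type*} [Fintype n]
    [DecidableEq n] {A : Matrix n n ℝ} (hA : A.IsHermitian) {v : n → ℝ}
    (hv : ∀ x, A *ᵥ x = 0 → x ⬝ᵥ v = 0) : ∃ u, A *ᵥ u = v := by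
  set T := toEuclideanLin A
  have hT : T.IsSymmetric := isSymmetric_toEuclideanLin_iff.mpr hA
  have hvT : WithLp.toLp 2 v ∈ LinearMap.range T := by
    rw [← Submodule.orthogonal_orthogonal (LinearMap.range T), hT.orthogonal_range,
      Submodule.mem_orthogonal]
    intro x hx
    rw [EuclideanSpace.inner_eq_star_dotProduct]
    simpa [dotProduct_comm] using hv x.ofLp (congrArg WithLp.ofLp hx)
  obtain ⟨u, hu⟩ := hvT
  exact ⟨u.ofLp, congrArg WithLp.ofLp hu⟩

theorem Matrix.dotProduct_mul_transpose_mulVec {m n R : Type*} [Fintype m] [Fintype n]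
    [CommSemiring R] (S : Matrix n m R) (x y : n → R) :
    x ⬝ᵥ ((S * Sᵀ) *ᵥ y) = Sᵀ *ᵥ x ⬝ᵥ Sᵀ *ᵥ y := by
  rw [← mulVec_mulVec, dotProduct_mulVec, ← mulVec_transpose]

section

variable {Γ m n : Type*} [MeasurableSpace Γ] {μ : Measure Γ}

theorem integral_dotProduct [Fintype n] {f : Γ → n → ℝ}
    (hf : ∀ i, Integrable (fun γ => f γ i) μ) (x : n → ℝ) :
    ∫ γ, x ⬝ᵥ f γ ∂μ = x ⬝ᵥ fun i => ∫ γ, f γ i ∂μ := by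
  simp only [dotProduct]
  rw [integral_finsetSum _ fun i _ => (hf i).const_mul (x i)]
  simp only [integral_const_mul]

theorem integrable_mulVec_apply [Fintype m] {M : Γ → Matrix n m ℝ} {y : Γ → m → ℝ}
    (hM : ∀ i j, Integrable (fun γ => M γ i j) μ)
    (hym : ∀ j, AEStronglyMeasurable (fun γ => y γ j) μ) (hyb : ∃ C, ∀ γ j, |y γ j| ≤ C)
    (i : n) : Integrable (fun γ => (M γ *ᵥ y γ) i) μ := by
  obtain ⟨C, hC⟩ := hyb
  simp only [mulVec, dotProduct]
  exact integrable_finsetSum _ fun j _ =>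
    (hM i j).mul_bdd (hym j) (ae_of_all _ fun γ => (Real.norm_eq_abs _).trans_le (hC γ j))

theorem integrable_mul_transpose_apply [Fintype m] [IsFiniteMeasure μ] {σ : Γ → Matrix n m ℝ}
    (hσm : ∀ i j, AEStronglyMeasurable (fun γ => σ γ i j) μ)
    (hσb : ∃ C, ∀ γ i j, |σ γ i j| ≤ C) (i j : n) :
    Integrable (fun γ => (σ γ * (σ γ)ᵀ) i j) μ := by
  obtain ⟨C, hC⟩ := hσb
  have hbound : ∀ i k, ∀ᵐ γ ∂μ, ‖σ γ i k‖ ≤ C := fun i k =>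
    ae_of_all _ fun γ => (Real.norm_eq_abs _).trans_le (hC γ i k)
  simp only [mul_apply, transpose_apply]
  exact integrable_finsetSum _ fun k _ =>
    (Integrable.of_bound (hσm j k) C (hbound j k)).bdd_mul (hσm i k) (hbound i k)

theorem ae_transpose_mulVec_eq_zero [Fintype m] [Fintype n] {σ : Γ → Matrix n m ℝ}
    {A : Matrix n n ℝ}
    (hint : ∀ i j, Integrable (fun γ => (σ γ * (σ γ)ᵀ) i j) μ)
    (hmean : ∀ i j, ∫ γ, (σ γ * (σ γ)ᵀ) i j ∂μ = A i j) {x : n → ℝ} (hx : A *ᵥ x = 0) :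
    ∀ᵐ γ ∂μ, (σ γ)ᵀ *ᵥ x = 0 := by
  have hxb : ∃ C, ∀ (_ : Γ) j, |x j| ≤ C :=
    ⟨‖x‖, fun _ j => (Real.norm_eq_abs _).symm.trans_le (norm_le_pi_norm x j)⟩
  have hint' :=
    integrable_mulVec_apply (y := fun _ => x) hint (fun _ => aestronglyMeasurable_const) hxb
  have hmean' : (fun i => ∫ γ, ((σ γ * (σ γ)ᵀ) *ᵥ x) i ∂μ) = A *ᵥ x := by
    ext i
    simp only [mulVec, ← hmean]
    rw [dotProduct_comm, ← integral_dotProduct (hint i)]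
    simp only [dotProduct_comm]
  have hquad : ∫ γ, x ⬝ᵥ ((σ γ * (σ γ)ᵀ) *ᵥ x) ∂μ = 0 := by
    rw [integral_dotProduct hint', hmean', hx, dotProduct_zero]
  have hnonneg : ∀ γ, 0 ≤ x ⬝ᵥ ((σ γ * (σ γ)ᵀ) *ᵥ x) := fun γ => by
    rw [dotProduct_mul_transpose_mulVec]
    exact Fintype.sum_nonneg fun _ => mul_self_nonneg _
  have hae := (integral_eq_zero_iff_of_nonneg hnonneg
    (integrable_finsetSum _ fun i _ => (hint' i).const_mul (x i))).mp hquad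
  filter_upwards [hae] with γ hγ
  rwa [Pi.zero_apply, dotProduct_mul_transpose_mulVec, dotProduct_self_eq_zero] at hγ

end

theorem stmt3_general {d : ℕ} {Γ : Type*} [MeasurableSpace Γ]
    (μ : Measure Γ) [IsProbabilityMeasure μ]
    (A : Matrix (Fin d) (Fin d) ℝ) (hA : A.PosSemidef)
    (σ : Γ → Matrix (Fin d) (Fin d) ℝ) (w : Γ → Fin d → ℝ)
    (hσm : ∀ i j, Measurable fun γ => σ γ i j)
    (hwm : ∀ i, Measurable fun γ => w γ i)
    (hσb : ∃ C, ∀ γ i j, |σ γ i j| ≤ C)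
    (hwb : ∃ C, ∀ γ i, |w γ i| ≤ C)
    (hmom : ∀ i j, (∫ γ, (σ γ * (σ γ)ᵀ) i j ∂μ) = A i j) :
    ∃ wbar : Fin d → ℝ, A *ᵥ wbar = fun i => ∫ γ, ((σ γ * (σ γ)ᵀ) *ᵥ w γ) i ∂μ := by
  have hint :=
    integrable_mul_transpose_apply (μ := μ) (fun i j => (hσm i j).aestronglyMeasurable) hσb
  refine hA.isHermitian.exists_mulVec_eq_of_dotProduct_eq_zero fun x hx => ?_
  have hσx := ae_transpose_mulVec_eq_zero hint hmom hx
  calc x ⬝ᵥ (fun i => ∫ γ, ((σ γ * (σ γ)ᵀ) *ᵥ w γ) i ∂μ)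
      = ∫ γ, x ⬝ᵥ ((σ γ * (σ γ)ᵀ) *ᵥ w γ) ∂μ :=
        (integral_dotProduct
          (integrable_mulVec_apply hint (fun j => (hwm j).aestronglyMeasurable) hwb) x).symm
    _ = 0 := integral_eq_zero_of_ae <| by
        filter_upwards [hσx] with γ hγ
        rw [dotProduct_mul_transpose_mulVec, hγ, zero_dotProduct, Pi.zero_apply]

theorem stmt3 {d : ℕ} (hd : 1 ≤ d) {Γ : Type*} [MeasurableSpace Γ]
    (μ : Measure Γ) [IsProbabilityMeasure μ]
    (A : Matrix (Fin d) (Fin d) ℝ) (hA : A.PosSemidef)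
    (σ : Γ → Matrix (Fin d) (Fin d) ℝ) (w : Γ → Fin d → ℝ)
    (hσm : ∀ i j, Measurable fun γ => σ γ i j)
    (hwm : ∀ i, Measurable fun γ => w γ i)
    (hσb : ∃ C, ∀ γ i j, |σ γ i j| ≤ C)
    (hwb : ∃ C, ∀ γ i, |w γ i| ≤ C)
    (hmom : ∀ i j, (∫ γ, (σ γ * (σ γ)ᵀ) i j ∂μ) = A i j) :
    ∃ wbar : Fin d → ℝ, A *ᵥ wbar = fun i => ∫ γ, ((σ γ * (σ γ)ᵀ) *ᵥ w γ) i ∂μ :=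
  stmt3_general μ A hA σ w hσm hwm hσb hwb hmom
end

section
/- Suppose f does not depend on z (f(x,y,z,v) = f(x,y,v)) and that for every (x,y) the set {((σσ^*)(x,v), b(x,v), f(x,y,v)) : v ∈ U} is convex (assumption (H2)). Then assumption (H) holds: for every (x,y) there exists a compact set A ⊆ ℝ^d × ℝ^d × U containing {(σ^*(x,v)w, 0, v) : v ∈ U, |σ^*(x,v)w| ≤ K} such that {((ΣΣ^*)(x,y,z,θ,v), β(x,y,z,θ,v)) : (z,θ,v) ∈ A} is convex. -/
open Matrix

/-- Euclidean norm of a vector in `Fin d → ℝ`. -/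
noncomputable def eucNorm {d : ℕ} (z : Fin d → ℝ) : ℝ := Real.sqrt (∑ i, z i ^ 2)

/-- The matrix `Σ(x,y,z,θ,v) = [[σ(x,v), 0],[z^*, θ^*]]`. -/
def SigmaMat {d : ℕ} (σxv : Matrix (Fin d) (Fin d) ℝ) (z θ : Fin d → ℝ) :
    Matrix (Fin d ⊕ Unit) (Fin d ⊕ Fin d) ℝ :=
  Matrix.fromBlocks σxv (0 : Matrix (Fin d) (Fin d) ℝ) (Matrix.replicateRow Unit z) (Matrix.replicateRow Unit θ)

/-!
Take `A = {(z, θ, v) : |z|² + |θ|² ≤ K²}`. Since `ΣΣᵀ = [[σσᵀ, σz], [(σz)ᵀ, |z|² + |θ|²]]`, a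
convex combination of two points of the image of `A` has first component a bordered matrix
`[[P, u], [uᵀ, s]]` with `s ≤ K²`, and by (H2) there is one `v` with `P = σσᵀ(v)` and the right
convex combination of `(b, -f)`. This bordered matrix is positive semidefinite, being a convex
combination of Gram matrices, so `(u·w)² ≤ s |σᵀ(v) w|²` for all `w`. Hence `u` lies in the range
of `σ(v)`, and its minimal-norm preimage `z` satisfies `|z|² ≤ s`; it remains to pick `θ` with
`|θ|² = s - |z|²`.
-/

open scoped InnerProductSpace in
theorem LinearMap.exists_apply_eq_norm_sq_le {E F : Type*}
    [NormedAddCommGroup E] [InnerProductSpace ℝ E] [FiniteDimensional ℝ E]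
    [NormedAddCommGroup F] [InnerProductSpace ℝ F] [FiniteDimensional ℝ F]
    (T : E →ₗ[ℝ] F) {u : F} {s : ℝ} (hs : 0 ≤ s)
    (h : ∀ w, ⟪u, w⟫_ℝ ^ 2 ≤ s * ‖T.adjoint w‖ ^ 2) :
    ∃ z, T z = u ∧ ‖z‖ ^ 2 ≤ s := by
  have hu : u ∈ (T ∘ₗ T.adjoint).range := by
    rw [range_self_comp_adjoint, ← Submodule.orthogonal_orthogonal T.range, orthogonal_range]
    intro w hw
    simpa [LinearMap.mem_ker.mp hw, real_inner_comm] using h w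
  obtain ⟨w, rfl⟩ := hu
  refine ⟨T.adjoint w, rfl, ?_⟩
  have hnorm : ‖T.adjoint w‖ ^ 2 = ⟪T (T.adjoint w), w⟫_ℝ := by
    rw [← real_inner_self_eq_norm_sq, adjoint_inner_left, real_inner_comm]
  have := h w
  rw [comp_apply, ← hnorm] at this
  rcases (sq_nonneg ‖T.adjoint w‖).eq_or_lt with h0 | h0
  · rw [← h0]; exact hs
  · nlinarith

lemma EuclideanSpace.real_norm_sq_eq_dotProduct {n : Type*} [Fintype n]
    (x : EuclideanSpace ℝ n) : ‖x‖ ^ 2 = x.ofLp ⬝ᵥ x.ofLp := by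
  rw [← real_inner_self_eq_norm_sq]
  rfl

section DotProduct

variable {m n k : Type*} [Fintype m] [Fintype n] [Fintype k]

lemma dotProduct_self_nonneg (a : n → ℝ) : 0 ≤ a ⬝ᵥ a := by
  simpa using dotProduct_star_self_nonneg a

lemma exists_dotProduct_self_eq [DecidableEq n] [Nonempty n] {r : ℝ} (hr : 0 ≤ r) :
    ∃ θ : n → ℝ, θ ⬝ᵥ θ = r := by
  obtain ⟨i⟩ := ‹Nonempty n›
  exact ⟨Pi.single i √r, by simp [hr]⟩

lemma isCompact_setOf_dotProduct_self_le (r : ℝ) : IsCompact {a : n → ℝ | a ⬝ᵥ a ≤ r} := by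
  refine Metric.isCompact_of_isClosed_isBounded
    (isClosed_le (continuous_id.dotProduct continuous_id) continuous_const) ?_
  refine (Metric.isBounded_closedBall (x := 0) (r := √r)).subset fun a ha => ?_
  rw [mem_closedBall_zero_iff, pi_norm_le_iff_of_nonneg (Real.sqrt_nonneg r)]
  intro i
  rw [Real.norm_eq_abs]
  refine Real.abs_le_sqrt (le_trans ?_ ha)
  rw [sq]
  exact Finset.single_le_sum (fun j _ => mul_self_nonneg (a j)) (Finset.mem_univ i)

lemma dotProduct_mul_transpose_mulVec (σ : Matrix m k ℝ) (w : m → ℝ) :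
    w ⬝ᵥ (σ * σᵀ) *ᵥ w = σᵀ *ᵥ w ⬝ᵥ σᵀ *ᵥ w := by
  rw [← mulVec_mulVec, dotProduct_mulVec, mulVec_transpose]

lemma posSemidef_self_mul_transpose (σ : Matrix m k ℝ) : (σ * σᵀ).PosSemidef := by
  simpa using posSemidef_self_mul_conjTranspose σ

theorem Matrix.exists_mulVec_eq_dotProduct_self_le [DecidableEq m] [DecidableEq k]
    (σ : Matrix m k ℝ) {u : m → ℝ} {s : ℝ} (hs : 0 ≤ s)
    (h : ∀ w, (u ⬝ᵥ w) ^ 2 ≤ s * (σᵀ *ᵥ w ⬝ᵥ σᵀ *ᵥ w)) :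
    ∃ z, σ *ᵥ z = u ∧ z ⬝ᵥ z ≤ s := by
  obtain ⟨z, hz, hzs⟩ := σ.toEuclideanLin.exists_apply_eq_norm_sq_le (u := WithLp.toLp 2 u) hs
    fun w => by
      simpa [← toEuclideanLin_conjTranspose_eq_adjoint, EuclideanSpace.real_norm_sq_eq_dotProduct,
        EuclideanSpace.inner_eq_star_dotProduct, dotProduct_comm] using h w.ofLp
  exact ⟨z.ofLp, congrArg WithLp.ofLp hz, by rwa [← EuclideanSpace.real_norm_sq_eq_dotProduct]⟩

end DotProduct

section BorderedMatrix

variable {m n k : Type*}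

def borderedMatrix (P : Matrix n n ℝ) (u : n → ℝ) (s : ℝ) :
    Matrix (n ⊕ Unit) (n ⊕ Unit) ℝ :=
  fromBlocks P (replicateCol Unit u) (replicateRow Unit u) (of fun _ _ => s)

lemma borderedMatrix_add (P P' : Matrix n n ℝ) (u u' : n → ℝ) (s s' : ℝ) :
    borderedMatrix P u s + borderedMatrix P' u' s' =
      borderedMatrix (P + P') (u + u') (s + s') := by
  simp only [borderedMatrix, fromBlocks_add, replicateCol_add, replicateRow_add]
  rfl

lemma smul_borderedMatrix (a : ℝ) (P : Matrix n n ℝ) (u : n → ℝ) (s : ℝ) :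
    a • borderedMatrix P u s = borderedMatrix (a • P) (a • u) (a * s) := by
  simp only [borderedMatrix, fromBlocks_smul, replicateCol_smul, replicateRow_smul]
  rfl

variable [Fintype m] [Fintype n] [Fintype k]

lemma Matrix.PosSemidef.sq_dotProduct_le_of_borderedMatrix {P : Matrix n n ℝ} {u : n → ℝ}
    {s : ℝ} (h : (borderedMatrix P u s).PosSemidef) (w : n → ℝ) :
    (u ⬝ᵥ w) ^ 2 ≤ s * (w ⬝ᵥ P *ᵥ w) := by
  have hquad : ∀ t : ℝ, 0 ≤ s * (t * t) + 2 * (u ⬝ᵥ w) * t + w ⬝ᵥ P *ᵥ w := fun t => by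
    have := h.dotProduct_mulVec_nonneg (Sum.elim w fun _ => t)
    simp only [borderedMatrix, fromBlocks_mulVec, star_trivial, sumElim_dotProduct_sumElim,
      Sum.elim_comp_inl, Sum.elim_comp_inr, replicateRow_mulVec_eq_const] at this
    have hcol : (replicateCol Unit u *ᵥ fun _ => t) = t • u := by
      ext; simp [mulVec, dotProduct, mul_comm]
    have hcorner : (fun _ => t) ⬝ᵥ
        (Function.const Unit (u ⬝ᵥ w) + (of fun _ _ => s) *ᵥ fun (_ : Unit) => t) =
          t * (u ⬝ᵥ w) + s * (t * t) := by
      simp [dotProduct, mulVec]; ring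
    rw [dotProduct_add, hcol, dotProduct_smul, hcorner, dotProduct_comm w u, smul_eq_mul] at this
    linarith
  have := discrim_le_zero hquad
  rw [discrim] at this
  linarith

theorem Matrix.PosSemidef.exists_mulVec_eq_of_borderedMatrix [DecidableEq m] [DecidableEq k]
    {σ : Matrix m k ℝ} {u : m → ℝ} {s : ℝ} (h : (borderedMatrix (σ * σᵀ) u s).PosSemidef) :
    ∃ z, σ *ᵥ z = u ∧ z ⬝ᵥ z ≤ s := by
  refine σ.exists_mulVec_eq_dotProduct_self_le ?_ fun w => ?_
  · simpa [borderedMatrix] using h.diag_nonneg (i := Sum.inr ())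
  · rw [← dotProduct_mul_transpose_mulVec]
    exact h.sq_dotProduct_le_of_borderedMatrix w

end BorderedMatrix

lemma eucNorm_eq_sqrt_dotProduct {d : ℕ} (a : Fin d → ℝ) : eucNorm a = √(a ⬝ᵥ a) := by
  simp [eucNorm, dotProduct, sq]

lemma sigmaMat_mul_transpose {d : ℕ} (σ : Matrix (Fin d) (Fin d) ℝ) (z θ : Fin d → ℝ) :
    SigmaMat σ z θ * (SigmaMat σ z θ)ᵀ =
      borderedMatrix (σ * σᵀ) (σ *ᵥ z) (z ⬝ᵥ z + θ ⬝ᵥ θ) := by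
  simp only [SigmaMat, borderedMatrix, fromBlocks_transpose, fromBlocks_multiply,
    transpose_replicateRow, transpose_zero, Matrix.mul_zero, Matrix.zero_mul, add_zero,
    fromBlocks_inj, replicateRow_mul_replicateCol]
  refine ⟨trivial, (replicateCol_mulVec σ z).symm, ?_, ?_⟩
  · rw [replicateRow_mulVec, transpose_mul, transpose_replicateCol]
  · ext; rfl

def controlBall {n : Type*} [Fintype n] (U : Type*) (r : ℝ) : Set ((n → ℝ) × (n → ℝ) × U) :=
  {p | p.1 ⬝ᵥ p.1 + p.2.1 ⬝ᵥ p.2.1 ≤ r}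

lemma isCompact_controlBall {n : Type*} [Fintype n] (U : Type*) [TopologicalSpace U]
    [CompactSpace U] (r : ℝ) : IsCompact (controlBall (n := n) U r) := by
  refine ((isCompact_setOf_dotProduct_self_le r).prod
    ((isCompact_setOf_dotProduct_self_le r).prod isCompact_univ)).of_isClosed_subset
    (isClosed_le (by fun_prop) continuous_const) fun p hp => ?_
  have hp : p.1 ⬝ᵥ p.1 + p.2.1 ⬝ᵥ p.2.1 ≤ r := hp
  have := dotProduct_self_nonneg p.1
  have := dotProduct_self_nonneg p.2.1
  exact ⟨show p.1 ⬝ᵥ p.1 ≤ r by linarith, show p.2.1 ⬝ᵥ p.2.1 ≤ r by linarith, trivial⟩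

theorem convex_image_sigmaMat_controlBall {d : ℕ} [NeZero d] {U E : Type*} [AddCommGroup E]
    [Module ℝ E] (σ : U → Matrix (Fin d) (Fin d) ℝ) (β : U → E)
    (hconv : Convex ℝ (Set.range fun v => (σ v * (σ v)ᵀ, β v))) (r : ℝ) :
    Convex ℝ {q | ∃ p ∈ controlBall U r,
      q = (SigmaMat (σ p.2.2) p.1 p.2.1 * (SigmaMat (σ p.2.2) p.1 p.2.1)ᵀ, β p.2.2)} := by
  rintro _ ⟨⟨z₁, θ₁, v₁⟩, hp₁, rfl⟩ _ ⟨⟨z₂, θ₂, v₂⟩, hp₂, rfl⟩ a c ha hc hac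
  obtain ⟨v, hv⟩ := hconv ⟨v₁, rfl⟩ ⟨v₂, rfl⟩ ha hc hac
  simp only [Prod.smul_mk, Prod.mk_add_mk, Prod.mk.injEq] at hv
  obtain ⟨hP, hβ⟩ := hv
  set u := a • (σ v₁ *ᵥ z₁) + c • (σ v₂ *ᵥ z₂)
  set s := a * (z₁ ⬝ᵥ z₁ + θ₁ ⬝ᵥ θ₁) + c * (z₂ ⬝ᵥ z₂ + θ₂ ⬝ᵥ θ₂)
  have hgram : a • (SigmaMat (σ v₁) z₁ θ₁ * (SigmaMat (σ v₁) z₁ θ₁)ᵀ) +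
      c • (SigmaMat (σ v₂) z₂ θ₂ * (SigmaMat (σ v₂) z₂ θ₂)ᵀ) =
        borderedMatrix (σ v * (σ v)ᵀ) u s := by
    rw [sigmaMat_mul_transpose, sigmaMat_mul_transpose, smul_borderedMatrix, smul_borderedMatrix,
      borderedMatrix_add, hP]
  have hpsd : (borderedMatrix (σ v * (σ v)ᵀ) u s).PosSemidef := hgram ▸
    ((posSemidef_self_mul_transpose _).smul ha).add ((posSemidef_self_mul_transpose _).smul hc)
  obtain ⟨z, hz, hzs⟩ := hpsd.exists_mulVec_eq_of_borderedMatrix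
  obtain ⟨θ, hθ⟩ := exists_dotProduct_self_eq (n := Fin d) (sub_nonneg.2 hzs)
  have hzθ : z ⬝ᵥ z + θ ⬝ᵥ θ = s := by rw [hθ]; ring
  refine ⟨(z, θ, v), ?_, ?_⟩
  · have hr : a * r + c * r = r := by rw [← add_mul, hac, one_mul]
    show z ⬝ᵥ z + θ ⬝ᵥ θ ≤ r
    linarith [mul_le_mul_of_nonneg_left hp₁.out ha, mul_le_mul_of_nonneg_left hp₂.out hc]
  · rw [Prod.smul_mk, Prod.smul_mk, Prod.mk_add_mk, hgram, sigmaMat_mul_transpose, hz, hzθ, hβ]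

theorem stmt13_general {d : ℕ} (hd : 1 ≤ d) {U : Type*} [MetricSpace U] [CompactSpace U]
    (σ : (Fin d → ℝ) → U → Matrix (Fin d) (Fin d) ℝ)
    (b : (Fin d → ℝ) → U → Fin d → ℝ)
    (f : (Fin d → ℝ) → ℝ → U → ℝ)
    (K : ℝ)
    (H2 : ∀ (x : Fin d → ℝ) (y : ℝ),
      Convex ℝ {q : Matrix (Fin d) (Fin d) ℝ × (Fin d → ℝ) × ℝ |
        ∃ v : U, q = (σ x v * (σ x v)ᵀ, b x v, f x y v)}) :
    ∀ (x : Fin d → ℝ) (y : ℝ),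
      ∃ A : Set ((Fin d → ℝ) × (Fin d → ℝ) × U), IsCompact A ∧
        {p : (Fin d → ℝ) × (Fin d → ℝ) × U | ∃ (v : U) (w : Fin d → ℝ),
            eucNorm ((σ x v)ᵀ *ᵥ w) ≤ K ∧ p = ((σ x v)ᵀ *ᵥ w, 0, v)} ⊆ A ∧
        Convex ℝ {q : Matrix (Fin d ⊕ Unit) (Fin d ⊕ Unit) ℝ × ((Fin d → ℝ) × ℝ) |
          ∃ p ∈ A, q = (SigmaMat (σ x p.2.2) p.1 p.2.1 * (SigmaMat (σ x p.2.2) p.1 p.2.1)ᵀ,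
            (b x p.2.2, -f x y p.2.2))} := by
  intro x y
  have : NeZero d := ⟨by omega⟩
  refine ⟨controlBall U (K ^ 2), isCompact_controlBall U _, ?_, ?_⟩
  · rintro _ ⟨v, w, hw, rfl⟩
    rw [eucNorm_eq_sqrt_dotProduct, Real.sqrt_le_iff] at hw
    simpa [controlBall] using hw.2
  · have hconv : Convex ℝ (Set.range fun v => (σ x v * (σ x v)ᵀ, b x v, -f x y v)) := by
      let negLast : Matrix (Fin d) (Fin d) ℝ × (Fin d → ℝ) × ℝ →ₗ[ℝ]
          Matrix (Fin d) (Fin d) ℝ × (Fin d → ℝ) × ℝ :=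
        LinearMap.id.prodMap (LinearMap.id.prodMap (-LinearMap.id))
      have hrange : negLast '' {q | ∃ v : U, q = (σ x v * (σ x v)ᵀ, b x v, f x y v)} =
          Set.range fun v => (σ x v * (σ x v)ᵀ, b x v, -f x y v) := by
        ext q; simp [negLast, eq_comm]
      exact hrange ▸ (H2 x y).linear_image negLast
    exact convex_image_sigmaMat_controlBall (σ x) (fun v => (b x v, -f x y v)) hconv (K ^ 2)

theorem stmt13 {d : ℕ} (hd : 1 ≤ d) {U : Type*} [MetricSpace U] [CompactSpace U]
    (σ : (Fin d → ℝ) → U → Matrix (Fin d) (Fin d) ℝ)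
    (b : (Fin d → ℝ) → U → Fin d → ℝ)
    (f : (Fin d → ℝ) → ℝ → U → ℝ)
    (M L K : ℝ) (hK : 0 < K)
    (hσM : ∀ x v i j, |σ x v i j| ≤ M)
    (hbM : ∀ x v i, |b x v i| ≤ M)
    (hfM : ∀ x y v, |f x y v| ≤ M)
    (hσlip : ∀ x x' v, (∀ i j, |σ x v i j - σ x' v i j| ≤ L * eucNorm (x - x')))
    (hblip : ∀ x x' v, eucNorm (b x v - b x' v) ≤ L * eucNorm (x - x'))
    (hflip : ∀ x x' y y' v, |f x y v - f x' y' v| ≤ L * (eucNorm (x - x') + |y - y'|))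
    (hσc : ∀ x, Continuous fun v => σ x v)
    (hbc : ∀ x, Continuous fun v => b x v)
    (hfc : ∀ x y, Continuous fun v => f x y v)
    (H2 : ∀ (x : Fin d → ℝ) (y : ℝ),
      Convex ℝ {q : Matrix (Fin d) (Fin d) ℝ × (Fin d → ℝ) × ℝ |
        ∃ v : U, q = (σ x v * (σ x v)ᵀ, b x v, f x y v)}) :
    ∀ (x : Fin d → ℝ) (y : ℝ),
      ∃ A : Set ((Fin d → ℝ) × (Fin d → ℝ) × U), IsCompact A ∧
        {p : (Fin d → ℝ) × (Fin d → ℝ) × U | ∃ (v : U) (w : Fin d → ℝ),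
            eucNorm ((σ x v)ᵀ *ᵥ w) ≤ K ∧ p = ((σ x v)ᵀ *ᵥ w, 0, v)} ⊆ A ∧
        Convex ℝ {q : Matrix (Fin d ⊕ Unit) (Fin d ⊕ Unit) ℝ × ((Fin d → ℝ) × ℝ) |
          ∃ p ∈ A, q = (SigmaMat (σ x p.2.2) p.1 p.2.1 * (SigmaMat (σ x p.2.2) p.1 p.2.1)ᵀ,
            (b x p.2.2, -f x y p.2.2))} :=
  stmt13_general hd σ b f K H2
end
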